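/- arXiv:2501.08740 — 3 statements merged into one kernel-verified Lean document; each statement's English description precedes it below -/
import Mathlib

section
/- Let g be a Lie algebra with almost complex structure J. Note a_1(J) = {X : [X,g] = 0 and [JX,g] = 0} is contained in the center of g. If J is nilpotent (a_k(J) = g for some k), then g is a nilpotent Lie algebra. -/
/-! Membership in `a (k + 1)` requires `⁅X, g⁆ ⊆ a k`, which is the recursion defining the upper
central series, so by induction `a k` lies in its `k`-th term. Hence `a 1` is central,
and `a k = ⊤` forces the upper central series to reach the whole algebra. -/

section UpperCentralSeries

variable {R L M : Type*} [CommRing R] [LieRing L] [LieAlgebra R L]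
  [AddCommGroup M] [Module R M] [LieRingModule L M] [LieModule R L M]

theorem LieSubmodule.le_ucs_of_lie_mem_pred (a : ℕ → Submodule R M) (h0 : a 0 = ⊥)
    (hsucc : ∀ k, ∀ m ∈ a (k + 1), ∀ x : L, ⁅x, m⁆ ∈ a k) :
    ∀ k, a k ≤ ((⊥ : LieSubmodule R L M).ucs k : Submodule R M)
  | 0 => by simp [h0]
  | k + 1 => fun m hm => by
    rw [LieSubmodule.ucs_succ, LieSubmodule.mem_toSubmodule, LieSubmodule.mem_normalizer]
    exact fun x => le_ucs_of_lie_mem_pred a h0 hsucc k (hsucc k m hm x)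

theorem LieModule.isNilpotent_of_lie_mem_pred (a : ℕ → Submodule R M) (h0 : a 0 = ⊥)
    (hsucc : ∀ k, ∀ m ∈ a (k + 1), ∀ x : L, ⁅x, m⁆ ∈ a k) (htop : ∃ k, a k = ⊤) :
    LieModule.IsNilpotent L M := by
  obtain ⟨k, hk⟩ := htop
  refine (LieModule.isNilpotent_iff_exists_ucs_eq_top R).mpr ⟨k, ?_⟩
  rw [← LieSubmodule.toSubmodule_eq_top, eq_top_iff, ← hk]
  exact LieSubmodule.le_ucs_of_lie_mem_pred a h0 hsucc k

end UpperCentralSeries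

theorem nilpotent_acs_implies_nilpotent_lie_algebra_general
    {g : Type*} [LieRing g] [LieAlgebra ℝ g]
    (J : g →ₗ[ℝ] g)
    (a : ℕ → Submodule ℝ g)
    (ha0 : a 0 = ⊥)
    (haS : ∀ k, ∀ X : g,
      X ∈ a (k + 1) ↔ (∀ Y : g, ⁅X, Y⁆ ∈ a k) ∧ (∀ Y : g, ⁅J X, Y⁆ ∈ a k)) :
    (∀ X : g, X ∈ a 1 → X ∈ LieAlgebra.center ℝ g) ∧
      ((∃ k, a k = ⊤) → LieRing.IsNilpotent g) := by
  have hsucc : ∀ k, ∀ X ∈ a (k + 1), ∀ Y : g, ⁅Y, X⁆ ∈ a k := fun k X hX Y =>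
    lie_skew Y X ▸ neg_mem (((haS k X).1 hX).1 Y)
  refine ⟨fun X hX => ?_, LieModule.isNilpotent_of_lie_mem_pred a ha0 hsucc⟩
  have hucs := LieSubmodule.le_ucs_of_lie_mem_pred (L := g) a ha0 hsucc 1 hX
  rwa [LieSubmodule.ucs_succ, LieSubmodule.ucs_zero,
    LieSubmodule.normalizer_bot_eq_maxTrivSubmodule] at hucs

theorem nilpotent_acs_implies_nilpotent_lie_algebra
    {g : Type*} [LieRing g] [LieAlgebra ℝ g]
    (J : g →ₗ[ℝ] g) (hJ : ∀ X : g, J (J X) = -X)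
    (a : ℕ → Submodule ℝ g)
    (ha0 : a 0 = ⊥)
    (haS : ∀ k, ∀ X : g,
      X ∈ a (k + 1) ↔ (∀ Y : g, ⁅X, Y⁆ ∈ a k) ∧ (∀ Y : g, ⁅J X, Y⁆ ∈ a k)) :
    (∀ X : g, X ∈ a 1 → X ∈ LieAlgebra.center ℝ g) ∧
      ((∃ k, a k = ⊤) → LieRing.IsNilpotent g) :=
  nilpotent_acs_implies_nilpotent_lie_algebra_general J a ha0 haS
end

section
/- Let g be the complex Heisenberg Lie algebra with standard complex structure J (as above). The span V of the image of the Nijenhuis tensor of the standard J is zero, whereas for the structure J₀ (Je₁=e₂, Je₃=e₅, Je₄=e₆ and J² = -id) the span of the image of N_{J₀} has real dimension at least 2. -/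
/-! The standard `J` commutes with every `ad X` (it is multiplication by `i` on the complex
Heisenberg algebra), and for such a `J` with `J² = -1` every term of `N_J X Y` is `±⁅X, Y⁆`; the four
signs cancel. For `J₀` (with `b i` the paper's `e_{i+1}`), `N_{J₀}(e₁, e₄) = e₃ + e₆` and
`N_{J₀}(e₁, e₃) = e₅ - e₄` are linearly independent. -/

section LieRing

variable {R L : Type*} [CommRing R] [LieRing L] [LieAlgebra R L]

theorem lie_map_eq_map_lie_of_basis {ι : Type*} (b : Module.Basis ι R L) (J : L →ₗ[R] L)
    (h : ∀ i j, ⁅J (b i), b j⁆ = J ⁅b i, b j⁆) (X Y : L) : ⁅J X, Y⁆ = J ⁅X, Y⁆ := by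
  let B : L →ₗ[R] L →ₗ[R] L := LieModule.toEnd R L L
  have hB : B ∘ₗ J = B.compr₂ J := b.ext fun i => b.ext fun j => by simpa [B] using h i j
  simpa [B] using LinearMap.congr_fun₂ hB X Y

theorem nijenhuis_eq_zero_of_lie_map_eq_map_lie (J : L →ₗ[R] L) (hJsq : ∀ X, J (J X) = -X)
    (hJ : ∀ X Y, ⁅J X, Y⁆ = J ⁅X, Y⁆) (X Y : L) :
    ⁅J X, J Y⁆ - J ⁅J X, Y⁆ - J ⁅X, J Y⁆ - ⁅X, Y⁆ = 0 := by
  have hJ' : ⁅X, J Y⁆ = J ⁅X, Y⁆ := by rw [← lie_skew, hJ, ← map_neg, lie_skew]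
  rw [hJ, hJ', hJ, hJsq]
  abel

end LieRing

theorem two_le_finrank_span_of_pair {K V : Type*} [DivisionRing K] [AddCommGroup V] [Module K V]
    [Module.Finite K V] {s : Set V} {u v : V} (hu : u ∈ s) (hv : v ∈ s)
    (huv : LinearIndependent K ![u, v]) : 2 ≤ Module.finrank K (Submodule.span K s) := by
  have hle : Submodule.span K (Set.range ![u, v]) ≤ Submodule.span K s :=
    Submodule.span_mono (Set.range_subset_iff.2 fun i => by fin_cases i <;> assumption)
  simpa [finrank_span_eq_card huv] using Submodule.finrank_mono hle

theorem nijenhuis_rank_standard_vs_J0_general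
    {g : Type*} [LieRing g] [LieAlgebra ℝ g]
    (b : Module.Basis (Fin 6) ℝ g)
    (h02 : ⁅b 0, b 2⁆ = -b 4) (h13 : ⁅b 1, b 3⁆ = b 4)
    (h03 : ⁅b 0, b 3⁆ = -b 5) (h12 : ⁅b 1, b 2⁆ = -b 5)
    (hzero : ∀ i j : Fin 6,
      ((i, j) : Fin 6 × Fin 6) ∉
        ({(0, 2), (2, 0), (1, 3), (3, 1), (0, 3), (3, 0), (1, 2), (2, 1)} :
          Set (Fin 6 × Fin 6)) → ⁅b i, b j⁆ = 0)
    (J : g →ₗ[ℝ] g) (hJsq : ∀ X : g, J (J X) = -X)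
    (hJ0 : J (b 0) = b 1) (hJ1 : J (b 1) = -b 0)
    (hJ2 : J (b 2) = b 3) (hJ3 : J (b 3) = -b 2)
    (hJ4 : J (b 4) = b 5) (hJ5 : J (b 5) = -b 4)
    (J₀ : g →ₗ[ℝ] g)
    (hJ₀0 : J₀ (b 0) = b 1)
    (hJ₀2 : J₀ (b 2) = b 4) (hJ₀4 : J₀ (b 4) = -b 2)
    (hJ₀3 : J₀ (b 3) = b 5) (hJ₀5 : J₀ (b 5) = -b 3)
    (N N₀ : g → g → g)
    (hN : ∀ X Y : g, N X Y = ⁅J X, J Y⁆ - J ⁅J X, Y⁆ - J ⁅X, J Y⁆ - ⁅X, Y⁆)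
    (hN₀ : ∀ X Y : g, N₀ X Y = ⁅J₀ X, J₀ Y⁆ - J₀ ⁅J₀ X, Y⁆ - J₀ ⁅X, J₀ Y⁆ - ⁅X, Y⁆) :
    Submodule.span ℝ {v : g | ∃ X Y : g, v = N X Y} = ⊥ ∧
      2 ≤ Module.finrank ℝ (Submodule.span ℝ {v : g | ∃ X Y : g, v = N₀ X Y}) := by
  have hJ_lie : ∀ X Y, ⁅J X, Y⁆ = J ⁅X, Y⁆ := by
    refine lie_map_eq_map_lie_of_basis b J fun i j => ?_
    have h20 : ⁅b 2, b 0⁆ = b 4 := by rw [← lie_skew, h02, neg_neg]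
    have h31 : ⁅b 3, b 1⁆ = -b 4 := by rw [← lie_skew, h13]
    have h30 : ⁅b 3, b 0⁆ = b 5 := by rw [← lie_skew, h03, neg_neg]
    have h21 : ⁅b 2, b 1⁆ = b 5 := by rw [← lie_skew, h12, neg_neg]
    fin_cases i <;> fin_cases j <;>
      simp [hJ0, hJ1, hJ2, hJ3, hJ4, hJ5, h02, h13, h03, h12, h20, h31, h30, h21, hzero]
  have hN₀03 : N₀ (b 0) (b 3) = b 2 + b 5 := by
    simp [hN₀, hJ₀0, hJ₀3, hJ₀4, h13, h03, hzero]
  have hN₀02 : N₀ (b 0) (b 2) = b 4 - b 3 := by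
    simp [hN₀, hJ₀0, hJ₀2, hJ₀5, h12, h02, hzero, neg_add_eq_sub]
  have hindep : LinearIndependent ℝ ![b 2 + b 5, b 4 - b 3] :=
    LinearIndependent.pair_iff.2 fun s t hst =>
      ⟨by simpa using congr_arg (b.repr · 2) hst, by simpa using congr_arg (b.repr · 4) hst⟩
  have : Module.Finite ℝ g := Module.Finite.of_basis b
  refine ⟨Submodule.span_eq_bot.2 ?_,
    two_le_finrank_span_of_pair ⟨_, _, hN₀03.symm⟩ ⟨_, _, hN₀02.symm⟩ hindep⟩
  rintro _ ⟨X, Y, rfl⟩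
  rw [hN]
  exact nijenhuis_eq_zero_of_lie_map_eq_map_lie J hJsq hJ_lie X Y

theorem nijenhuis_rank_standard_vs_J0
    {g : Type*} [LieRing g] [LieAlgebra ℝ g]
    (b : Module.Basis (Fin 6) ℝ g)
    (h02 : ⁅b 0, b 2⁆ = -b 4) (h13 : ⁅b 1, b 3⁆ = b 4)
    (h03 : ⁅b 0, b 3⁆ = -b 5) (h12 : ⁅b 1, b 2⁆ = -b 5)
    (hzero : ∀ i j : Fin 6,
      ((i, j) : Fin 6 × Fin 6) ∉
        ({(0, 2), (2, 0), (1, 3), (3, 1), (0, 3), (3, 0), (1, 2), (2, 1)} :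
          Set (Fin 6 × Fin 6)) → ⁅b i, b j⁆ = 0)
    (J : g →ₗ[ℝ] g) (hJsq : ∀ X : g, J (J X) = -X)
    (hJ0 : J (b 0) = b 1) (hJ1 : J (b 1) = -b 0)
    (hJ2 : J (b 2) = b 3) (hJ3 : J (b 3) = -b 2)
    (hJ4 : J (b 4) = b 5) (hJ5 : J (b 5) = -b 4)
    (J₀ : g →ₗ[ℝ] g) (hJ₀sq : ∀ X : g, J₀ (J₀ X) = -X)
    (hJ₀0 : J₀ (b 0) = b 1) (hJ₀1 : J₀ (b 1) = -b 0)
    (hJ₀2 : J₀ (b 2) = b 4) (hJ₀4 : J₀ (b 4) = -b 2)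
    (hJ₀3 : J₀ (b 3) = b 5) (hJ₀5 : J₀ (b 5) = -b 3)
    (N N₀ : g → g → g)
    (hN : ∀ X Y : g, N X Y = ⁅J X, J Y⁆ - J ⁅J X, Y⁆ - J ⁅X, J Y⁆ - ⁅X, Y⁆)
    (hN₀ : ∀ X Y : g, N₀ X Y = ⁅J₀ X, J₀ Y⁆ - J₀ ⁅J₀ X, Y⁆ - J₀ ⁅X, J₀ Y⁆ - ⁅X, Y⁆) :
    Submodule.span ℝ {v : g | ∃ X Y : g, v = N X Y} = ⊥ ∧
      2 ≤ Module.finrank ℝ (Submodule.span ℝ {v : g | ∃ X Y : g, v = N₀ X Y}) :=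
  nijenhuis_rank_standard_vs_J0_general b h02 h13 h03 h12 hzero J hJsq hJ0 hJ1 hJ2 hJ3 hJ4 hJ5 J₀
    hJ₀0 hJ₀2 hJ₀4 hJ₀3 hJ₀5 N N₀ hN hN₀
end

section
/- Let J be the almost complex structure on the third real vector space direct sum ℝ⁶ underlying the complex Heisenberg Lie algebra defined previously (J₀: e₁↦e₂, e₃↦e₅, e₄↦e₆). Then [g^{1,0}, g^{1,0}] ⊄ g^{1,0} in g ⊗ ℂ; explicitly, the bracket of the (1,0)-vectors e₁ - i e₂ and e₃ - i e₅ has nonzero component in g^{0,1}. -/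
/-!
Writing `ℂ ⊗[ℝ] g = g ⊕ i g`, the bracket of `e₁ - i e₂` and `e₃ - i e₅` is `-e₅ + i e₆`.
A vector `X - i J₀ X` of `g^{1,0}` with real part `-e₅` has imaginary part `-J₀(-e₅) = -e₃`,
not `e₆`.
-/

open scoped TensorProduct

namespace Complex

variable {V : Type*} [AddCommGroup V] [Module ℝ V]

variable (V) in
noncomputable def reTensor : ℂ ⊗[ℝ] V →ₗ[ℝ] V :=
  TensorProduct.lid ℝ V ∘ₗ reLm.rTensor V

variable (V) in
noncomputable def imTensor : ℂ ⊗[ℝ] V →ₗ[ℝ] V :=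
  TensorProduct.lid ℝ V ∘ₗ imLm.rTensor V

@[simp]
theorem reTensor_tmul (a : ℂ) (x : V) : reTensor V (a ⊗ₜ x) = a.re • x := rfl

@[simp]
theorem imTensor_tmul (a : ℂ) (x : V) : imTensor V (a ⊗ₜ x) = a.im • x := rfl

theorem one_tmul_sub_I_tmul_inj {x y x' y' : V}
    (h : (1 : ℂ) ⊗ₜ[ℝ] x - I ⊗ₜ[ℝ] y = (1 : ℂ) ⊗ₜ[ℝ] x' - I ⊗ₜ[ℝ] y') : x = x' ∧ y = y' := by
  have hre := congrArg (reTensor V) h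
  have him := congrArg (imTensor V) h
  simp only [map_sub, reTensor_tmul, imTensor_tmul, one_re, one_im, I_re, I_im, one_smul,
    zero_smul, sub_zero, zero_sub, neg_inj] at hre him
  exact ⟨hre, him⟩

end Complex

open Complex in
theorem LieAlgebra.ExtendScalars.lie_one_tmul_sub_I_tmul {L : Type*} [LieRing L]
    [LieAlgebra ℝ L] (x y x' y' : L) :
    ⁅(1 : ℂ) ⊗ₜ[ℝ] x - I ⊗ₜ[ℝ] y, (1 : ℂ) ⊗ₜ[ℝ] x' - I ⊗ₜ[ℝ] y'⁆ =
      (1 : ℂ) ⊗ₜ[ℝ] (⁅x, x'⁆ - ⁅y, y'⁆) - I ⊗ₜ[ℝ] (⁅x, y'⁆ + ⁅y, x'⁆) := by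
  simp only [lie_sub, sub_lie, bracket_tmul, one_mul, mul_one, I_mul_I, TensorProduct.tmul_sub,
    TensorProduct.tmul_add, TensorProduct.neg_tmul]
  abel

theorem J0_holomorphic_vectors_bracket_escapes_general
    {g : Type*} [LieRing g] [LieAlgebra ℝ g]
    (b : Module.Basis (Fin 6) ℝ g)
    (h02 : ⁅b 0, b 2⁆ = -b 4) (h12 : ⁅b 1, b 2⁆ = -b 5)
    (hzero : ∀ i j : Fin 6,
      ((i, j) : Fin 6 × Fin 6) ∉
        ({(0, 2), (2, 0), (1, 3), (3, 1), (0, 3), (3, 0), (1, 2), (2, 1)} :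
          Set (Fin 6 × Fin 6)) → ⁅b i, b j⁆ = 0)
    (J₀ : g →ₗ[ℝ] g)
    (hJ₀4 : J₀ (b 4) = -b 2) :
    ⁅((1 : ℂ) ⊗ₜ[ℝ] b 0 - Complex.I ⊗ₜ[ℝ] b 1 : ℂ ⊗[ℝ] g),
        (1 : ℂ) ⊗ₜ[ℝ] b 2 - Complex.I ⊗ₜ[ℝ] b 4⁆ ∉
      Set.range (fun X : g => (1 : ℂ) ⊗ₜ[ℝ] X - Complex.I ⊗ₜ[ℝ] (J₀ X)) := by
  rintro ⟨X, hX⟩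
  have hbracket : ⁅((1 : ℂ) ⊗ₜ[ℝ] b 0 - Complex.I ⊗ₜ[ℝ] b 1 : ℂ ⊗[ℝ] g),
      (1 : ℂ) ⊗ₜ[ℝ] b 2 - Complex.I ⊗ₜ[ℝ] b 4⁆ =
        (1 : ℂ) ⊗ₜ[ℝ] (-b 4) - Complex.I ⊗ₜ[ℝ] (-b 5) := by
    rw [LieAlgebra.ExtendScalars.lie_one_tmul_sub_I_tmul, h02, h12, hzero 0 4 (by decide),
      hzero 1 4 (by decide), sub_zero, zero_add]
  obtain ⟨rfl, hJX⟩ := Complex.one_tmul_sub_I_tmul_inj (hX.trans hbracket)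
  have h25 : b 2 = -b 5 := by simpa [hJ₀4] using hJX
  simpa using congrArg (fun v => b.repr v 5) h25

theorem J0_holomorphic_vectors_bracket_escapes
    {g : Type*} [LieRing g] [LieAlgebra ℝ g]
    (b : Module.Basis (Fin 6) ℝ g)
    (h02 : ⁅b 0, b 2⁆ = -b 4) (h13 : ⁅b 1, b 3⁆ = b 4)
    (h03 : ⁅b 0, b 3⁆ = -b 5) (h12 : ⁅b 1, b 2⁆ = -b 5)
    (hzero : ∀ i j : Fin 6,
      ((i, j) : Fin 6 × Fin 6) ∉
        ({(0, 2), (2, 0), (1, 3), (3, 1), (0, 3), (3, 0), (1, 2), (2, 1)} :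
          Set (Fin 6 × Fin 6)) → ⁅b i, b j⁆ = 0)
    (J₀ : g →ₗ[ℝ] g) (hJ₀sq : ∀ X : g, J₀ (J₀ X) = -X)
    (hJ₀0 : J₀ (b 0) = b 1) (hJ₀1 : J₀ (b 1) = -b 0)
    (hJ₀2 : J₀ (b 2) = b 4) (hJ₀4 : J₀ (b 4) = -b 2)
    (hJ₀3 : J₀ (b 3) = b 5) (hJ₀5 : J₀ (b 5) = -b 3) :
    ⁅((1 : ℂ) ⊗ₜ[ℝ] b 0 - Complex.I ⊗ₜ[ℝ] b 1 : ℂ ⊗[ℝ] g),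
        (1 : ℂ) ⊗ₜ[ℝ] b 2 - Complex.I ⊗ₜ[ℝ] b 4⁆ ∉
      Set.range (fun X : g => (1 : ℂ) ⊗ₜ[ℝ] X - Complex.I ⊗ₜ[ℝ] (J₀ X)) :=
  J0_holomorphic_vectors_bracket_escapes_general b h02 h12 hzero J₀ hJ₀4
end
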